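/- arXiv:2601.03965 — 3 statements merged into one kernel-verified Lean document; each statement's English description precedes it below -/
import Mathlib

section
/- The matrix Lax equation d/dt(M + L + λJ²) = [M + L + λJ², Ω + λJ] holds for all λ if and only if dM/dt = [M + L, Ω], given that [L, J] = 0 and M = JΩ + ΩJ. -/
open Matrix

/-- The matrix Lax equation `d/dt (M + L + λJ²) = [M + L + λJ², Ω + λJ]`
holds for all `λ` if and only if `dM/dt = [M + L, Ω]`, given that
`[L, J] = 0` and `M = JΩ + ΩJ` (here `J` is a constant diagonal matrix, `L`
a constant skew-symmetric matrix, and `M(t)`, `Ω(t)` are skew-symmetric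
matrix curves). -/
theorem stmt_2 {n : ℕ} (J L : Matrix (Fin n) (Fin n) ℝ)
    (M Om : ℝ → Matrix (Fin n) (Fin n) ℝ)
    (hJ : J.IsDiag) (hL : Lᵀ = -L) (hLJ : L * J - J * L = 0)
    (hskewM : ∀ t, (M t)ᵀ = -(M t)) (hskewOm : ∀ t, (Om t)ᵀ = -(Om t))
    (hMJ : ∀ t, M t = J * Om t + Om t * J) :
    (∀ (lam t : ℝ) (i j : Fin n),
        HasDerivAt (fun s => (M s + L + lam • J ^ 2) i j)
          (((M t + L + lam • J ^ 2) * (Om t + lam • J)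
            - (Om t + lam • J) * (M t + L + lam • J ^ 2)) i j) t)
      ↔
    (∀ (t : ℝ) (i j : Fin n),
        HasDerivAt (fun s => M s i j)
          (((M t + L) * Om t - Om t * (M t + L)) i j) t) := by
  have hcomm : L * J = J * L := sub_eq_zero.mp hLJ
  have key : ∀ (lam t : ℝ),
      (M t + L + lam • J ^ 2) * (Om t + lam • J)
        - (Om t + lam • J) * (M t + L + lam • J ^ 2)
      = (M t + L) * Om t - Om t * (M t + L) := by
    intro lam t
    rw [hMJ t]
    simp only [add_mul, mul_add, smul_mul_assoc, mul_smul_comm, smul_smul, smul_add,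
      pow_two, mul_assoc]
    rw [hcomm]
    abel
  constructor
  · intro h t i j
    have h0 := h 0 t i j
    simp only [zero_smul, add_zero] at h0
    have hf : (fun s => (M s + L) i j) = fun s => M s i j + L i j := by
      funext s; simp [Matrix.add_apply]
    rw [hf] at h0
    have := h0.sub_const (L i j)
    simpa [key 0 t, zero_smul, add_zero] using this
  · intro h lam t i j
    have hf : (fun s => (M s + L + lam • J ^ 2) i j)
        = fun s => M s i j + ((L + lam • J ^ 2) i j) := by
      funext s; simp [Matrix.add_apply]; ring
    rw [hf, key lam t]
    exact (h t i j).add_const _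
end

section
/- Along solutions of the rigid body equation dK/dt = [K, Ω] + [Γ, χ], dΓ/dt = [Γ, Ω] (with K, Γ, Ω, χ skew-symmetric matrix curves and constants), the functions tr(Γ^{2k}) and tr(K Γ^{2k−1}) are conserved for every k ≥ 1. -/
/-!
The equation `Γ' = ⁅Γ, Ω⁆` is a Lax equation, and it propagates to powers by the Leibniz rule:
`(Γ ^ k)' = ⁅Γ ^ k, Ω⁆`. Traces of commutators vanish, so `tr (Γ ^ k)` is constant. For `K Γ ^ k`
the derivative `(⁅K, Ω⁆ + ⁅Γ, χ⁆) Γ ^ k + K ⁅Γ ^ k, Ω⁆` equals `⁅K Γ ^ k, Ω⁆ + ⁅Γ, χ Γ ^ k⁆`,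
because `Γ` commutes with `Γ ^ k`; it is again a sum of commutators, hence traceless.
-/

open Matrix

section MatrixDeriv

variable {𝕜 : Type*} [NontriviallyNormedField 𝕜] {l m n : Type*} [Fintype m]
  [Fintype n] {x : 𝕜}

theorem hasDerivAt_matrix_iff {f : 𝕜 → Matrix l n 𝕜} {f' : Matrix l n 𝕜} :
    HasDerivAt f f' x ↔ ∀ i j, HasDerivAt (fun s => f s i j) (f' i j) x :=
  hasDerivAt_pi.trans (forall_congr' fun _ => hasDerivAt_pi)

theorem HasDerivAt.matrix_mul {f : 𝕜 → Matrix l m 𝕜} {g : 𝕜 → Matrix m n 𝕜}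
    {f' : Matrix l m 𝕜} {g' : Matrix m n 𝕜} (hf : HasDerivAt f f' x) (hg : HasDerivAt g g' x) :
    HasDerivAt (fun s => f s * g s) (f' * g x + f x * g') x := by
  rw [hasDerivAt_matrix_iff] at *
  intro i j
  simp only [mul_apply, Matrix.add_apply, ← Finset.sum_add_distrib]
  exact HasDerivAt.fun_sum fun k _ => (hf i k).fun_mul (hg k j)

theorem HasDerivAt.matrix_trace {f : 𝕜 → Matrix m m 𝕜} {f' : Matrix m m 𝕜}
    (hf : HasDerivAt f f' x) : HasDerivAt (fun s => (f s).trace) f'.trace x :=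
  HasDerivAt.fun_sum fun i _ => hasDerivAt_matrix_iff.1 hf i i

theorem HasDerivAt.matrix_pow_of_lax [DecidableEq m] {Γ : 𝕜 → Matrix m m 𝕜} {Ω : Matrix m m 𝕜}
    (hΓ : HasDerivAt Γ ⁅Γ x, Ω⁆ x) (k : ℕ) :
    HasDerivAt (fun s => Γ s ^ k) ⁅Γ x ^ k, Ω⁆ x := by
  induction k with
  | zero =>
    simp only [pow_zero, Ring.lie_def, one_mul, mul_one, sub_self]
    exact hasDerivAt_matrix_iff.2 fun i j => hasDerivAt_const x _
  | succ k ih =>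
    simp only [pow_succ]
    convert ih.matrix_mul hΓ using 1
    simp only [Ring.lie_def]
    noncomm_ring

end MatrixDeriv

theorem trace_rigidBody_deriv_mul_pow_eq_zero {m R : Type*} [Fintype m] [DecidableEq m]
    [CommRing R] (K Γ Ω χ : Matrix m m R) (k : ℕ) :
    ((⁅K, Ω⁆ + ⁅Γ, χ⁆) * Γ ^ k + K * ⁅Γ ^ k, Ω⁆).trace = 0 := by
  have hcomm : Γ ^ k * Γ = Γ * Γ ^ k := (Commute.self_pow Γ k).symm.eq
  have : (⁅K, Ω⁆ + ⁅Γ, χ⁆) * Γ ^ k + K * ⁅Γ ^ k, Ω⁆ = ⁅K * Γ ^ k, Ω⁆ + ⁅Γ, χ * Γ ^ k⁆ := by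
    simp only [Ring.lie_def, mul_assoc, hcomm]
    noncomm_ring
  rw [this, trace_add, LieAlgebra.matrix_trace_commutator_zero,
    LieAlgebra.matrix_trace_commutator_zero, add_zero]

section Conservation

variable {𝕜 : Type*} [RCLike 𝕜] {m : Type*} [Fintype m] [DecidableEq m]

theorem trace_pow_eq_of_lax {Γ Ω : 𝕜 → Matrix m m 𝕜} (hΓ : ∀ t, HasDerivAt Γ ⁅Γ t, Ω t⁆ t)
    (k : ℕ) (t₁ t₂ : 𝕜) : (Γ t₁ ^ k).trace = (Γ t₂ ^ k).trace := by
  have h t : HasDerivAt (fun s => (Γ s ^ k).trace) 0 t := by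
    simpa using ((hΓ t).matrix_pow_of_lax k).matrix_trace
  exact is_const_of_deriv_eq_zero (fun t => (h t).differentiableAt) (fun t => (h t).deriv) t₁ t₂

theorem trace_mul_pow_eq_of_rigidBody {K Γ Ω : 𝕜 → Matrix m m 𝕜} {χ : Matrix m m 𝕜}
    (hK : ∀ t, HasDerivAt K (⁅K t, Ω t⁆ + ⁅Γ t, χ⁆) t) (hΓ : ∀ t, HasDerivAt Γ ⁅Γ t, Ω t⁆ t)
    (k : ℕ) (t₁ t₂ : 𝕜) : (K t₁ * Γ t₁ ^ k).trace = (K t₂ * Γ t₂ ^ k).trace := by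
  have h t : HasDerivAt (fun s => (K s * Γ s ^ k).trace) 0 t := by
    simpa only [trace_rigidBody_deriv_mul_pow_eq_zero] using
      ((hK t).matrix_mul ((hΓ t).matrix_pow_of_lax k)).matrix_trace
  exact is_const_of_deriv_eq_zero (fun t => (h t).differentiableAt) (fun t => (h t).deriv) t₁ t₂

end Conservation

theorem stmt_10_general {n : ℕ} (K Gam Om : ℝ → Matrix (Fin n) (Fin n) ℝ)
    (chi : Matrix (Fin n) (Fin n) ℝ)
    (hK : ∀ t i j, HasDerivAt (fun s => K s i j)
      (((K t * Om t - Om t * K t) + (Gam t * chi - chi * Gam t)) i j) t)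
    (hGam : ∀ t i j, HasDerivAt (fun s => Gam s i j)
      ((Gam t * Om t - Om t * Gam t) i j) t) :
    ∀ k : ℕ, 1 ≤ k → ∀ t₁ t₂ : ℝ,
      ((Gam t₁) ^ (2 * k)).trace = ((Gam t₂) ^ (2 * k)).trace
      ∧ (K t₁ * (Gam t₁) ^ (2 * k - 1)).trace
          = (K t₂ * (Gam t₂) ^ (2 * k - 1)).trace := by
  have hGam' t : HasDerivAt Gam ⁅Gam t, Om t⁆ t := hasDerivAt_matrix_iff.2 (hGam t)
  have hK' t : HasDerivAt K (⁅K t, Om t⁆ + ⁅Gam t, chi⁆) t := hasDerivAt_matrix_iff.2 (hK t)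
  intro k _ t₁ t₂
  exact ⟨trace_pow_eq_of_lax hGam' _ t₁ t₂, trace_mul_pow_eq_of_rigidBody hK' hGam' _ t₁ t₂⟩

/-- Along solutions of `dK/dt = [K, Ω] + [Γ, χ]`, `dΓ/dt = [Γ, Ω]` (with
`K, Γ, Ω` skew-symmetric matrix curves and `χ` a constant skew-symmetric
matrix), the functions `tr(Γ^{2k})` and `tr(K Γ^{2k-1})` are conserved for
every `k ≥ 1`. -/
theorem stmt_10 {n : ℕ} (K Gam Om : ℝ → Matrix (Fin n) (Fin n) ℝ)
    (chi : Matrix (Fin n) (Fin n) ℝ) (hchi : chiᵀ = -chi)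
    (hKs : ∀ t, (K t)ᵀ = -(K t)) (hGs : ∀ t, (Gam t)ᵀ = -(Gam t))
    (hOs : ∀ t, (Om t)ᵀ = -(Om t))
    (hK : ∀ t i j, HasDerivAt (fun s => K s i j)
      (((K t * Om t - Om t * K t) + (Gam t * chi - chi * Gam t)) i j) t)
    (hGam : ∀ t i j, HasDerivAt (fun s => Gam s i j)
      ((Gam t * Om t - Om t * Gam t) i j) t) :
    ∀ k : ℕ, 1 ≤ k → ∀ t₁ t₂ : ℝ,
      ((Gam t₁) ^ (2 * k)).trace = ((Gam t₂) ^ (2 * k)).trace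
      ∧ (K t₁ * (Gam t₁) ^ (2 * k - 1)).trace
          = (K t₂ * (Gam t₂) ^ (2 * k - 1)).trace :=
  stmt_10_general K Gam Om chi hK hGam
end

section
/- The Belyaev Lax representation: with Γ̂, M̂, L̂, χ̂, Ω̂ the (n+1)×(n+1) embeddings of Γ, χ ∈ ℝⁿ and M, L, Ω ∈ so(n), the coefficient of λ² in the Lax equation d/dt(Γ̂ + λ(M̂+L̂) + λ²(α₁+α₂)χ̂) = [Γ̂ + λ(M̂+L̂) + λ²(α₁+α₂)χ̂, Ω̂ + λχ̂] vanishes, given that M = JΩ + ΩJ with J = diag(α₁,…,α₁,α₂), χ = χₙEₙ, and [L̂, χ̂] = 0. -/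
open Matrix

/-- The embedding `so(n) → so(n+1)`, `ξ ↦ ξ̂`, extending by a zero last row
and column. -/
def hatSo {n : ℕ} (ξ : Matrix (Fin n) (Fin n) ℝ) :
    Matrix (Fin (n + 1)) (Fin (n + 1)) ℝ :=
  Matrix.of fun i j =>
    if h : (i : ℕ) < n ∧ (j : ℕ) < n then ξ ⟨i, h.1⟩ ⟨j, h.2⟩ else 0

/-- The embedding `ℝⁿ → so(n+1)`, `η ↦ η̂`, with last column `η`, last row
`-ηᵀ` and upper-left block zero. -/
def hatVec {n : ℕ} (η : Fin n → ℝ) :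
    Matrix (Fin (n + 1)) (Fin (n + 1)) ℝ :=
  Matrix.of fun i j =>
    if hi : (i : ℕ) < n then (if (j : ℕ) = n then η ⟨i, hi⟩ else 0)
    else if hj : (j : ℕ) < n then -η ⟨j, hj⟩ else 0


/-! For skew `ξ` the commutator `[ξ̂, η̂]` is again an embedded vector, namely `(ξ η)^`.
So both brackets in the claim are embedded vectors, and it reduces to `M χ = (α₁ + α₂) Ω χ`:
`χ = χₙ Eₙ` is an eigenvector of `J` for `α₂`, while `Ω χ` has vanishing last coordinate
(`Ω` is skew) and is therefore an eigenvector of `J` for `α₁`. -/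

section HatEntries

variable {n : ℕ}

@[simp] lemma hatSo_castSucc_castSucc (ξ : Matrix (Fin n) (Fin n) ℝ) (i j : Fin n) :
    hatSo ξ i.castSucc j.castSucc = ξ i j := by
  simp [hatSo]

@[simp] lemma hatSo_last_apply (ξ : Matrix (Fin n) (Fin n) ℝ) (j : Fin (n + 1)) :
    hatSo ξ (Fin.last n) j = 0 := by
  simp [hatSo]

@[simp] lemma hatSo_apply_last (ξ : Matrix (Fin n) (Fin n) ℝ) (i : Fin (n + 1)) :
    hatSo ξ i (Fin.last n) = 0 := by
  simp [hatSo]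

@[simp] lemma hatVec_castSucc_castSucc (η : Fin n → ℝ) (i j : Fin n) :
    hatVec η i.castSucc j.castSucc = 0 := by
  simp [hatVec, j.isLt.ne]

@[simp] lemma hatVec_castSucc_last (η : Fin n → ℝ) (i : Fin n) :
    hatVec η i.castSucc (Fin.last n) = η i := by
  simp [hatVec]

@[simp] lemma hatVec_last_castSucc (η : Fin n → ℝ) (j : Fin n) :
    hatVec η (Fin.last n) j.castSucc = -η j := by
  simp [hatVec]

@[simp] lemma hatVec_last_last (η : Fin n → ℝ) :
    hatVec η (Fin.last n) (Fin.last n) = 0 := by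
  simp [hatVec]

end HatEntries

lemma hatVec_smul {n : ℕ} (a : ℝ) (η : Fin n → ℝ) : hatVec (a • η) = a • hatVec η := by
  ext i j
  induction i using Fin.lastCases <;> induction j using Fin.lastCases <;> simp

lemma hatSo_mul_hatVec_sub {n : ℕ} {ξ : Matrix (Fin n) (Fin n) ℝ} (hξ : ξᵀ = -ξ)
    (η : Fin n → ℝ) : hatSo ξ * hatVec η - hatVec η * hatSo ξ = hatVec (ξ *ᵥ η) := by
  ext i j
  induction i using Fin.lastCases <;> induction j using Fin.lastCases <;>
    simp [mul_apply, Fin.sum_univ_castSucc, mulVec, dotProduct]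
  rw [← Finset.sum_neg_distrib]
  refine Finset.sum_congr rfl fun k _ => ?_
  rw [← transpose_apply ξ, hξ, neg_apply, mul_neg, mul_comm]

lemma Matrix.diagonal_mulVec_eq_smul {ι R : Type*} [Fintype ι] [DecidableEq ι]
    [NonUnitalNonAssocSemiring R] {d w : ι → R} {a : R} (h : ∀ i, w i ≠ 0 → d i = a) :
    diagonal d *ᵥ w = a • w := by
  ext i
  rw [mulVec_diagonal, Pi.smul_apply, smul_eq_mul]
  by_cases hw : w i = 0
  · simp [hw]
  · rw [h i hw]

lemma Matrix.mul_add_mul_mulVec_eq_smul {ι R : Type*} [Fintype ι] [CommSemiring R]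
    {J A : Matrix ι ι R} {v : ι → R} {a b : R} (hv : J *ᵥ v = b • v)
    (hAv : J *ᵥ (A *ᵥ v) = a • (A *ᵥ v)) :
    (J * A + A * J) *ᵥ v = (a + b) • (A *ᵥ v) := by
  rw [add_mulVec, ← mulVec_mulVec, ← mulVec_mulVec, hAv, hv, mulVec_smul, add_smul]

lemma Matrix.mulVec_single_apply_self_of_transpose_eq_neg {ι : Type*} [Fintype ι]
    [DecidableEq ι] {ξ : Matrix ι ι ℝ} (hξ : ξᵀ = -ξ) (k : ι) (c : ℝ) :
    (ξ *ᵥ Pi.single k c) k = 0 := by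
  have hkk : ξ k k = -ξ k k := by simpa using congr_fun₂ hξ k k
  simp [show ξ k k = 0 by linarith]

lemma Matrix.diagonal_ite_mul_add_mul_mulVec_single {ι : Type*} [Fintype ι]
    [DecidableEq ι] {Ω : Matrix ι ι ℝ} (hΩ : Ωᵀ = -Ω) (k : ι) (a b c : ℝ) :
    let J := diagonal fun i => if i = k then b else a
    (J * Ω + Ω * J) *ᵥ Pi.single k c = (a + b) • (Ω *ᵥ Pi.single k c) := by
  refine mul_add_mul_mulVec_eq_smul (diagonal_mulVec_eq_smul fun i hi => ?_)
    (diagonal_mulVec_eq_smul fun i hi => ?_)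
  · have hik : i = k := by
      by_contra hik
      simp [hik] at hi
    rw [if_pos hik]
  · have hik : i ≠ k := by
      rintro rfl
      exact hi (mulVec_single_apply_self_of_transpose_eq_neg hΩ i c)
    rw [if_neg hik]

theorem stmt_16_general {n : ℕ} (hn : 1 ≤ n) (a1 a2 chin : ℝ)
    (J M Om L : Matrix (Fin n) (Fin n) ℝ) (chi : Fin n → ℝ)
    (hJ : J = Matrix.diagonal (fun i : Fin n => if (i : ℕ) < n - 1 then a1 else a2))
    (hchi : chi = fun i : Fin n => if (i : ℕ) = n - 1 then chin else 0)
    (hOm : Omᵀ = -Om)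
    (hM : M = J * Om + Om * J)
    (hLchi : hatSo L * hatVec chi - hatVec chi * hatSo L = 0) :
    (a1 + a2) • (hatVec chi * hatSo Om - hatSo Om * hatVec chi)
      + ((hatSo M + hatSo L) * hatVec chi
          - hatVec chi * (hatSo M + hatSo L)) = 0 := by
  obtain ⟨k, hk⟩ : ∃ k : Fin n, (k : ℕ) = n - 1 := ⟨⟨n - 1, by omega⟩, rfl⟩
  have hJk : J = diagonal fun i => if i = k then a2 else a1 := by
    rw [hJ]
    congr 1
    ext i
    have hik : (i : ℕ) < n - 1 ↔ i ≠ k := by rw [Ne, Fin.ext_iff, hk]; omega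
    simp only [hik, ite_not]
  have hchik : chi = Pi.single k chin := by
    ext i; simp [hchi, Pi.single_apply, Fin.ext_iff, hk]
  have hMskew : Mᵀ = -M := by
    rw [hM, transpose_add, transpose_mul, transpose_mul, hOm, hJ, diagonal_transpose]
    noncomm_ring
  have hMchi : M *ᵥ chi = (a1 + a2) • (Om *ᵥ chi) := by
    rw [hM, hJk, hchik]
    exact diagonal_ite_mul_add_mul_mulVec_single hOm k a1 a2 chin
  have hsplit : (hatSo M + hatSo L) * hatVec chi - hatVec chi * (hatSo M + hatSo L)
      = (hatSo M * hatVec chi - hatVec chi * hatSo M)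
        + (hatSo L * hatVec chi - hatVec chi * hatSo L) := by
    noncomm_ring
  rw [hsplit, hLchi, hatSo_mul_hatVec_sub hMskew, hMchi, hatVec_smul, ← neg_sub,
    hatSo_mul_hatVec_sub hOm, smul_neg, add_zero, neg_add_cancel]

/-- The Belyaev Lax representation: the coefficient of `λ²` in the Lax
equation `d/dt (Γ̂ + λ(M̂+L̂) + λ²(α₁+α₂)χ̂) = [Γ̂ + λ(M̂+L̂) + λ²(α₁+α₂)χ̂,
Ω̂ + λχ̂]` vanishes, i.e. `(α₁+α₂)[χ̂, Ω̂] + [M̂+L̂, χ̂] = 0`, given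
`M = JΩ + ΩJ` with `J = diag(α₁,…,α₁,α₂)`, `χ = χₙEₙ` and `[L̂, χ̂] = 0`. -/
theorem stmt_16 {n : ℕ} (hn : 1 ≤ n) (a1 a2 chin : ℝ)
    (J M Om L : Matrix (Fin n) (Fin n) ℝ) (chi : Fin n → ℝ)
    (hJ : J = Matrix.diagonal (fun i : Fin n => if (i : ℕ) < n - 1 then a1 else a2))
    (hchi : chi = fun i : Fin n => if (i : ℕ) = n - 1 then chin else 0)
    (hOm : Omᵀ = -Om) (hL : Lᵀ = -L)
    (hM : M = J * Om + Om * J)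
    (hLchi : hatSo L * hatVec chi - hatVec chi * hatSo L = 0) :
    (a1 + a2) • (hatVec chi * hatSo Om - hatSo Om * hatVec chi)
      + ((hatSo M + hatSo L) * hatVec chi
          - hatVec chi * (hatSo M + hatSo L)) = 0 :=
  stmt_16_general hn a1 a2 chin J M Om L chi hJ hchi hOm hM hLchi
end
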